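/- arXiv:1811.08870 — 3 statements merged into one kernel-verified Lean document; each statement's English description precedes it below -/
import Mathlib

section
/- Let X be a complex Hilbert space, V a closed subspace of X with orthogonal projection P_V, ℓ_1,…,ℓ_m continuous linear functionals on X, and L : X → ℂ^m the map L(f) = (ℓ_1(f),…,ℓ_m(f)). Let y ∈ ℂ^m and ε > 0. Suppose f⋆ ∈ X satisfies L(f⋆) = y and ‖f⋆ − P_V f⋆‖ ≤ ‖f − P_V f‖ for every f ∈ X with L(f) = y. Then for every g ∈ X and every u ∈ ker(L) satisfying ‖f⋆ − P_V f⋆‖² + ‖u − P_V u‖² ≤ ε², one has sup{‖f − g‖ : f ∈ X, L(f) = y, dist(f, V) ≤ ε} ≥ ‖u‖. -/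
/-! Write `Q = P_{V^⊥}`, so that `f - P_V f = Q f` is linear in `f`. For real `t`, `f⋆ + t u` is
still consistent with the data, so minimality of `f⋆` gives `‖Q f⋆‖ ≤ ‖Q f⋆ + t Q u‖` for all `t`,
which forces `Re ⟪Q f⋆, Q u⟫ = 0`. By Pythagoras both `f± = f⋆ ± u` then satisfy
`dist(f±, V)² ≤ ‖Q f⋆‖² + ‖Q u‖² ≤ ε²`, and since `f₊ - f₋ = 2u`, one of them is at distance
at least `‖u‖` from `g`. -/

open RCLike

section InnerProduct

variable {𝕜 E : Type*} [RCLike 𝕜] [SeminormedAddCommGroup E] [InnerProductSpace 𝕜 E]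

theorem re_inner_eq_zero_of_forall_norm_le_norm_add_smul {a b : E}
    (h : ∀ t : ℝ, ‖a‖ ≤ ‖a + (t : 𝕜) • b‖) : re (inner 𝕜 a b) = 0 := by
  have hquad : ∀ t : ℝ, 0 ≤ ‖b‖ ^ 2 * (t * t) + 2 * re (inner 𝕜 a b) * t + 0 := fun t => by
    have hsq := pow_le_pow_left₀ (norm_nonneg a) (h t) 2
    rw [norm_add_sq (𝕜 := 𝕜), inner_smul_right, re_ofReal_mul, norm_smul, norm_ofReal,
      mul_pow, sq_abs] at hsq
    linarith
  have := discrim_le_zero hquad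
  rw [discrim] at this
  nlinarith [sq_nonneg (re (inner 𝕜 a b))]

theorem norm_add_sq_eq_of_re_inner_eq_zero {a b : E} (h : re (inner 𝕜 a b) = 0) :
    ‖a + b‖ ^ 2 = ‖a‖ ^ 2 + ‖b‖ ^ 2 := by
  rw [norm_add_sq (𝕜 := 𝕜), h]; ring

theorem norm_sub_sq_eq_of_re_inner_eq_zero {a b : E} (h : re (inner 𝕜 a b) = 0) :
    ‖a - b‖ ^ 2 = ‖a‖ ^ 2 + ‖b‖ ^ 2 := by
  rw [norm_sub_sq (𝕜 := 𝕜), h]; ring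

end InnerProduct

theorem norm_le_dist_add_or_norm_le_dist_sub {E : Type*} [SeminormedAddCommGroup E]
    [NormedSpace ℝ E] (x u g : E) : ‖u‖ ≤ dist (x + u) g ∨ ‖u‖ ≤ dist (x - u) g := by
  have hdiam : dist (x + u) (x - u) = 2 * ‖u‖ := by
    rw [dist_eq_norm, show x + u - (x - u) = (2 : ℝ) • u by module, norm_smul, Real.norm_two]
  by_contra! hfar
  linarith [dist_triangle_right (x + u) (x - u) g]

theorem Submodule.infDist_le_norm_starProjection_orthogonal {𝕜 E : Type*} [RCLike 𝕜]
    [NormedAddCommGroup E] [InnerProductSpace 𝕜 E] (K : Submodule 𝕜 E)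
    [K.HasOrthogonalProjection] (f : E) :
    Metric.infDist f (K : Set E) ≤ ‖Kᗮ.starProjection f‖ := by
  rw [starProjection_orthogonal_val, ← dist_eq_norm]
  exact Metric.infDist_le_dist_of_mem (K.orthogonalProjectionOnto f).2

theorem stmt3_general {X : Type*} [NormedAddCommGroup X] [InnerProductSpace ℂ X]
    (V : Submodule ℂ X) [V.HasOrthogonalProjection]
    {m : ℕ} (ℓ : Fin m → X →L[ℂ] ℂ) (y : Fin m → ℂ) (ε : ℝ) (hε : 0 < ε)
    (fs : X) (hfsy : ∀ k, ℓ k fs = y k)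
    (hfsmin : ∀ f : X, (∀ k, ℓ k f = y k) →
      ‖fs - (V.orthogonalProjectionOnto fs : X)‖ ≤ ‖f - (V.orthogonalProjectionOnto f : X)‖)
    (g : X) (u : X) (hu : ∀ k, ℓ k u = 0)
    (huε : ‖fs - (V.orthogonalProjectionOnto fs : X)‖ ^ 2
        + ‖u - (V.orthogonalProjectionOnto u : X)‖ ^ 2 ≤ ε ^ 2) :
    ∃ f : X, (∀ k, ℓ k f = y k) ∧ Metric.infDist f (V : Set X) ≤ ε ∧ ‖u‖ ≤ ‖f - g‖ := by
  have hres (f : X) : f - (V.orthogonalProjectionOnto f : X) = Vᗮ.starProjection f :=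
    (Submodule.starProjection_orthogonal_val f).symm
  simp only [hres] at hfsmin huε
  have horth : re (inner ℂ (Vᗮ.starProjection fs) (Vᗮ.starProjection u)) = 0 :=
    re_inner_eq_zero_of_forall_norm_le_norm_add_smul fun t => by
      have := hfsmin (fs + (t : ℂ) • u) (by simp [hfsy, hu])
      rwa [map_add, map_smul] at this
  have hmodel (f : X) (hf : ‖Vᗮ.starProjection f‖ ^ 2 ≤ ε ^ 2) :
      Metric.infDist f (V : Set X) ≤ ε :=
    (V.infDist_le_norm_starProjection_orthogonal f).trans
      ((sq_le_sq₀ (norm_nonneg _) hε.le).1 hf)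
  rcases norm_le_dist_add_or_norm_le_dist_sub fs u g with hfar | hfar
  · refine ⟨fs + u, by simp [hfsy, hu], hmodel _ ?_, by rwa [← dist_eq_norm]⟩
    rwa [map_add, norm_add_sq_eq_of_re_inner_eq_zero horth]
  · refine ⟨fs - u, by simp [hfsy, hu], hmodel _ ?_, by rwa [← dist_eq_norm]⟩
    rwa [map_sub, norm_sub_sq_eq_of_re_inner_eq_zero horth]

/-- Lower-bound half of the optimal-recovery theorem for approximability models in
complex Hilbert spaces: for any candidate recovery `g` and any kernel element `u` with
`‖f⋆ - P_V f⋆‖² + ‖u - P_V u‖² ≤ ε²`, the worst-case error of `g` over the model set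
`{f : L f = y, dist(f, V) ≤ ε}` is at least `‖u‖`. -/
theorem stmt3 {X : Type*} [NormedAddCommGroup X] [InnerProductSpace ℂ X] [CompleteSpace X]
    (V : Submodule ℂ X) [V.HasOrthogonalProjection]
    {m : ℕ} (ℓ : Fin m → X →L[ℂ] ℂ) (y : Fin m → ℂ) (ε : ℝ) (hε : 0 < ε)
    (fs : X) (hfsy : ∀ k, ℓ k fs = y k)
    (hfsmin : ∀ f : X, (∀ k, ℓ k f = y k) →
      ‖fs - (V.orthogonalProjectionOnto fs : X)‖ ≤ ‖f - (V.orthogonalProjectionOnto f : X)‖)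
    (g : X) (u : X) (hu : ∀ k, ℓ k u = 0)
    (huε : ‖fs - (V.orthogonalProjectionOnto fs : X)‖ ^ 2
        + ‖u - (V.orthogonalProjectionOnto u : X)‖ ^ 2 ≤ ε ^ 2) :
    ∃ f : X, (∀ k, ℓ k f = y k) ∧ Metric.infDist f (V : Set X) ≤ ε ∧ ‖u‖ ≤ ‖f - g‖ :=
  stmt3_general V ℓ y ε hε fs hfsy hfsmin g u hu huε
end

section
/- Fix 0 < r < 1 and a positive integer m, and set ζ_k = r·exp(2πi(k−1)/m) for k = 1,…,m. Let g = (g_j)_{j≥0} ∈ ℓ²(ℕ, ℂ) and define h_ℓ = Σ_{t≥0} g_{ℓ+tm} r^{tm} for ℓ = 0,…,m−1. Then: (i) the polynomial P(z) = Σ_{ℓ=0}^{m−1} h_ℓ z^ℓ interpolates, i.e. P(ζ_k) = Σ_{j≥0} g_j ζ_k^j for every k = 1,…,m; and (ii) Σ_{ℓ=0}^{m−1} |h_ℓ|² ≤ (1/(1 − r^{2m})) · Σ_{j≥0} |g_j|². -/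
/-!
Since `ζ_k ^ m = r ^ m`, grouping the indices of `Σ_j g_j ζ_k^j` by their residue modulo `m`
gives `Σ_{ℓ<m} h_ℓ ζ_k^ℓ`, which is the interpolation property. For the bound, Cauchy–Schwarz
gives `|h_ℓ|² ≤ (Σ_t |g_{ℓ+tm}|²) · Σ_t r^{2tm} = (1 - r^{2m})⁻¹ Σ_t |g_{ℓ+tm}|²`, and summing
over the residues `ℓ` recovers `Σ_j |g_j|²`.
-/

open Finset

theorem tsum_eq_sum_range_tsum_add_mul {E : Type*} [AddCommGroup E] [UniformSpace E]
    [IsUniformAddGroup E] [T2Space E] [CompleteSpace E] {m : ℕ} (hm : m ≠ 0) {f : ℕ → E}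
    (hf : Summable f) : ∑' j, f j = ∑ l ∈ range m, ∑' t, f (l + t * m) := by
  have : NeZero m := ⟨hm⟩
  let e : Fin m × ℕ ≃ ℕ := (Equiv.prodComm (Fin m) ℕ).trans (Nat.divModEquiv m).symm
  have he : ∀ l t, e (l, t) = l + t * m := fun l t => by simp [e, Nat.add_comm]
  have hfe : Summable fun p => f (e p) := e.summable_iff.2 hf
  rw [← e.tsum_eq f, Summable.tsum_prod' hfe hfe.prod_factor, tsum_fintype,
    ← Fin.sum_univ_eq_sum_range (fun l => ∑' t, f (l + t * m))]
  simp only [he]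

theorem Real.summable_mul_and_sq_tsum_mul_le {ι : Type*} {f g : ι → ℝ} (hf : ∀ i, 0 ≤ f i)
    (hg : ∀ i, 0 ≤ g i) (hf2 : Summable fun i => f i ^ 2) (hg2 : Summable fun i => g i ^ 2) :
    (Summable fun i => f i * g i) ∧
      (∑' i, f i * g i) ^ 2 ≤ (∑' i, f i ^ 2) * ∑' i, g i ^ 2 := by
  have hF : 0 ≤ ∑' i, f i ^ 2 := tsum_nonneg fun i => sq_nonneg (f i)
  have hG : 0 ≤ ∑' i, g i ^ 2 := tsum_nonneg fun i => sq_nonneg (g i)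
  simp only [← Real.rpow_two] at hf2 hg2
  obtain ⟨hfg, hle⟩ := summable_and_inner_le_Lp_mul_Lq_tsum_of_nonneg .two_two hf hg hf2 hg2
  simp only [Real.rpow_two, ← Real.sqrt_eq_rpow, ← Real.sqrt_mul hF] at hle
  exact ⟨hfg, (Real.le_sqrt (tsum_nonneg fun i => mul_nonneg (hf i) (hg i))
    (mul_nonneg hF hG)).1 hle⟩

theorem hasSum_sq_pow_geometric {ρ : ℝ} (hρ0 : 0 ≤ ρ) (hρ1 : ρ < 1) :
    HasSum (fun t : ℕ => (ρ ^ t) ^ 2) (1 - ρ ^ 2)⁻¹ := by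
  simp only [pow_right_comm ρ _ 2]
  exact hasSum_geometric_of_lt_one (by positivity) (pow_lt_one₀ hρ0 hρ1 two_ne_zero)

theorem Complex.exp_two_pi_mul_I_mul_div_pow (k : ℕ) {m : ℕ} (hm : m ≠ 0) :
    exp (2 * Real.pi * I * k / m) ^ m = 1 := by
  rw [← exp_nat_mul, mul_div_cancel₀ _ (Nat.cast_ne_zero.2 hm), mul_comm,
    exp_nat_mul_two_pi_mul_I]

section PowerSeries

variable {𝕜 : Type*} [NormedField 𝕜] {a : ℕ → 𝕜} {w : 𝕜}

theorem summable_norm_mul_pow_of_summable_sq (ha : Summable fun t => ‖a t‖ ^ 2)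
    (hw : ‖w‖ < 1) : Summable fun t => ‖a t * w ^ t‖ := by
  simp only [norm_mul, norm_pow]
  exact (Real.summable_mul_and_sq_tsum_mul_le (fun t => norm_nonneg _) (fun t => by positivity)
    ha (hasSum_sq_pow_geometric (norm_nonneg w) hw).summable).1

theorem sq_norm_tsum_mul_pow_le (ha : Summable fun t => ‖a t‖ ^ 2) (hw : ‖w‖ < 1) :
    ‖∑' t, a t * w ^ t‖ ^ 2 ≤ (∑' t, ‖a t‖ ^ 2) / (1 - ‖w‖ ^ 2) := by
  have hgeom := hasSum_sq_pow_geometric (norm_nonneg w) hw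
  have htri : ‖∑' t, a t * w ^ t‖ ≤ ∑' t, ‖a t‖ * ‖w‖ ^ t := by
    simpa only [norm_mul, norm_pow] using
      norm_tsum_le_tsum_norm (f := fun t => a t * w ^ t)
        (summable_norm_mul_pow_of_summable_sq ha hw)
  calc ‖∑' t, a t * w ^ t‖ ^ 2 ≤ (∑' t, ‖a t‖ * ‖w‖ ^ t) ^ 2 :=
        pow_le_pow_left₀ (norm_nonneg _) htri 2
    _ ≤ (∑' t, ‖a t‖ ^ 2) * ∑' t : ℕ, (‖w‖ ^ t) ^ 2 :=
        (Real.summable_mul_and_sq_tsum_mul_le (f := fun t => ‖a t‖) (g := fun t => ‖w‖ ^ t)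
          (fun t => norm_nonneg _) (fun t => by positivity) ha hgeom.summable).2
    _ = (∑' t, ‖a t‖ ^ 2) / (1 - ‖w‖ ^ 2) := by rw [hgeom.tsum_eq, div_eq_mul_inv]

theorem tsum_mul_pow_eq_sum_range [CompleteSpace 𝕜] {m : ℕ} (hm : m ≠ 0)
    (ha : Summable fun j => a j * w ^ j) :
    ∑' j, a j * w ^ j = ∑ l ∈ range m, (∑' t, a (l + t * m) * (w ^ m) ^ t) * w ^ l := by
  rw [tsum_eq_sum_range_tsum_add_mul hm ha]
  refine sum_congr rfl fun l _ => ?_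
  rw [← tsum_mul_right]
  exact tsum_congr fun t => by ring

end PowerSeries

/-- The polynomial interpolation operator at the `m` equispaced points
`ζ_k = r e^{2πi(k-1)/m}`: for `g ∈ ℓ²` the coefficients `h_ℓ = Σ_t g_{ℓ+tm} r^{tm}`
define a polynomial of degree `< m` interpolating `F_g(z) = Σ g_j z^j` at the `ζ_k`,
with `Σ_{ℓ<m} |h_ℓ|² ≤ (1/(1-r^{2m})) Σ_j |g_j|²`. -/
theorem stmt12 (r : ℝ) (hr0 : 0 < r) (hr1 : r < 1) (m : ℕ) (hm : 0 < m)
    (ζ : Fin m → ℂ)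
    (hζ : ∀ k, ζ k = (r : ℂ) * Complex.exp (2 * Real.pi * Complex.I * (k : ℕ) / m))
    (g : ℕ → ℂ) (hg : Summable (fun j : ℕ => ‖g j‖ ^ 2))
    (h : ℕ → ℂ) (hh : ∀ l : ℕ, h l = ∑' t : ℕ, g (l + t * m) * (r : ℂ) ^ (t * m)) :
    (∀ k, ∑ l ∈ Finset.range m, h l * ζ k ^ l = ∑' j : ℕ, g j * ζ k ^ j) ∧
      ∑ l ∈ Finset.range m, ‖h l‖ ^ 2 ≤ (1 / (1 - r ^ (2 * m))) * ∑' j : ℕ, ‖g j‖ ^ 2 := by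
  have hm0 : m ≠ 0 := hm.ne'
  have hnorm : ‖(r : ℂ) ^ m‖ = r ^ m := by
    rw [norm_pow, Complex.norm_real, Real.norm_of_nonneg hr0.le]
  have hrm : ‖(r : ℂ) ^ m‖ < 1 := hnorm ▸ pow_lt_one₀ hr0.le hr1 hm0
  have hh' : ∀ l, h l = ∑' t, g (l + t * m) * ((r : ℂ) ^ m) ^ t := fun l => by
    simp only [hh l, ← pow_mul, mul_comm m]
  refine ⟨fun k => ?_, ?_⟩
  · have hζm : ζ k ^ m = (r : ℂ) ^ m := by
      rw [hζ k, mul_pow, Complex.exp_two_pi_mul_I_mul_div_pow _ hm0, mul_one]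
    have hζ1 : ‖ζ k‖ < 1 :=
      (pow_lt_one_iff_of_nonneg (norm_nonneg _) hm0).1 (by rwa [← norm_pow, hζm])
    rw [tsum_mul_pow_eq_sum_range hm0 (summable_norm_mul_pow_of_summable_sq hg hζ1).of_norm, hζm]
    simp only [hh']
  · calc ∑ l ∈ range m, ‖h l‖ ^ 2
        ≤ ∑ l ∈ range m, (∑' t, ‖g (l + t * m)‖ ^ 2) / (1 - r ^ (2 * m)) := by
          gcongr with l
          rw [hh', pow_mul', ← hnorm]
          exact sq_norm_tsum_mul_pow_le
            (hg.comp_injective ((add_right_injective l).comp (mul_left_injective₀ hm0))) hrm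
      _ = (1 / (1 - r ^ (2 * m))) * ∑' j : ℕ, ‖g j‖ ^ 2 := by
          rw [← sum_div, ← tsum_eq_sum_range_tsum_add_mul hm0 hg, one_div_mul_eq_div]
end

section
/- Let 𝒱 be a nonzero finite-dimensional linear subspace of the disc algebra A(𝔻) and let ζ_1, …, ζ_m be distinct points on the unit circle such that no nonzero element of 𝒱 vanishes at all of ζ_1, …, ζ_m. Then sup{ ‖F‖_∞ / dist_∞(F, 𝒱) : F ∈ A(𝔻), F ≠ 0, F(ζ_1) = ⋯ = F(ζ_m) = 0 } = 1 + sup{ ‖V‖_∞ / max_{k=1,…,m} |V(ζ_k)| : V ∈ 𝒱, V ≠ 0 }. -/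
/-!
Write `M(V) = max_k |V(ζ_k)|`; on the finite-dimensional space `𝒱` this is a norm, so
`C = sup ‖V‖_∞ / M(V)` is finite. If `F` vanishes at the `ζ_k`, then `M(V) = M(F - V) ≤ ‖F - V‖_∞`
for every `V ∈ 𝒱`, whence `‖F‖_∞ ≤ ‖F - V‖_∞ + C M(V) ≤ (1 + C) ‖F - V‖_∞`.

Conversely, given `V`, pick a point `z₀` of the circle, distinct from the `ζ_k`, where `|V|` nearly
attains `‖V‖_∞`, and an entire `G` with `G(ζ_k) = V(ζ_k)`, `|V(z₀) - G(z₀)| = |V(z₀)| + M(V)` and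
`‖G‖_∞ ≤ (1 + ε) M(V)`. Then `F = V - G` vanishes at the `ζ_k`, `‖F‖_∞ ≳ ‖V‖_∞ + M(V)` and
`dist_∞(F, 𝒱) ≤ ‖G‖_∞ ≤ (1 + ε) M(V)`. The interpolant `G` replaces the Rudin–Carleson theorem:
it is `∑_j w_j L_j(z) ((z + η_j) / 2η_j)^N` with Lagrange polynomials `L_j` and `N` large, since
the factor `(z + η_j) / 2η_j` equals `1` at `η_j` and has modulus `< 1` elsewhere on the closed disc.
-/

/-- `F` belongs to the disc algebra `A(𝔻)`: continuous on the closed unit disc and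
holomorphic on the open unit disc. -/
def MemDiscAlgebra (F : ℂ → ℂ) : Prop :=
  ContinuousOn F (Metric.closedBall 0 1) ∧ DifferentiableOn ℂ F (Metric.ball 0 1)

/-- The sup norm over the closed unit disc. -/
noncomputable def supNorm (F : ℂ → ℂ) : ℝ :=
  ⨆ z : Metric.closedBall (0 : ℂ) 1, ‖F (z : ℂ)‖

/-- The sup-norm distance from `F` to a subspace `𝒱` of functions. -/
noncomputable def distSup (F : ℂ → ℂ) (𝒱 : Submodule ℂ (ℂ → ℂ)) : ℝ :=
  ⨅ V : 𝒱, supNorm (F - (V : ℂ → ℂ))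

open Metric Filter Topology Function

instance : Nonempty (closedBall (0 : ℂ) 1) := ⟨⟨0, mem_closedBall_self zero_le_one⟩⟩

section SupNorm

variable {F G : ℂ → ℂ}

lemma supNorm_nonneg (F : ℂ → ℂ) : 0 ≤ supNorm F :=
  Real.iSup_nonneg fun _ => norm_nonneg _

lemma norm_le_supNorm (hF : ContinuousOn F (closedBall 0 1)) {z : ℂ} (hz : ‖z‖ ≤ 1) :
    ‖F z‖ ≤ supNorm F :=
  le_ciSup (isCompact_range hF.domRestrict.norm).bddAbove
    (⟨z, mem_closedBall_zero_iff.2 hz⟩ : closedBall (0 : ℂ) 1)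

lemma supNorm_le {C : ℝ} (h : ∀ z, ‖z‖ ≤ 1 → ‖F z‖ ≤ C) : supNorm F ≤ C :=
  ciSup_le fun z => h z (mem_closedBall_zero_iff.1 z.2)

lemma supNorm_zero : supNorm 0 = 0 := by
  simp [supNorm]

lemma supNorm_add_le (hF : ContinuousOn F (closedBall 0 1)) (hG : ContinuousOn G (closedBall 0 1)) :
    supNorm (F + G) ≤ supNorm F + supNorm G :=
  supNorm_le fun _ hz =>
    (norm_add_le _ _).trans (add_le_add (norm_le_supNorm hF hz) (norm_le_supNorm hG hz))

lemma norm_le_iSup_norm_comp {ι : Type*} [Finite ι] (ζ : ι → ℂ) (k : ι) :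
    ‖F (ζ k)‖ ≤ ⨆ k, ‖F (ζ k)‖ :=
  le_ciSup (f := fun k => ‖F (ζ k)‖) (Set.finite_range _).bddAbove k

lemma iSup_norm_comp_le_supNorm {ι : Type*} {ζ : ι → ℂ} (hζ : ∀ k, ‖ζ k‖ ≤ 1)
    (hF : ContinuousOn F (closedBall 0 1)) : ⨆ k, ‖F (ζ k)‖ ≤ supNorm F :=
  Real.iSup_le (fun k => norm_le_supNorm hF (hζ k)) (supNorm_nonneg F)

lemma distSup_nonneg (F : ℂ → ℂ) (𝒱 : Submodule ℂ (ℂ → ℂ)) : 0 ≤ distSup F 𝒱 :=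
  le_ciInf fun _ => supNorm_nonneg _

lemma distSup_le {𝒱 : Submodule ℂ (ℂ → ℂ)} {V : ℂ → ℂ} (hV : V ∈ 𝒱) :
    distSup F 𝒱 ≤ supNorm (F - V) :=
  ciInf_le ⟨0, by rintro _ ⟨W, rfl⟩; exact supNorm_nonneg _⟩ (⟨V, hV⟩ : 𝒱)

end SupNorm

lemma norm_add_lt_two {z η : ℂ} (hz : ‖z‖ ≤ 1) (hη : ‖η‖ = 1) (hne : z ≠ η) : ‖z + η‖ < 2 := by
  have hpar := parallelogram_law_with_norm ℝ z η
  have hsub : 0 < ‖z - η‖ := norm_pos_iff.2 (sub_ne_zero.2 hne)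
  nlinarith [norm_nonneg (z + η), norm_nonneg z]

lemma IsCompact.eventually_forall_norm_mul_pow_le {X E : Type*} [TopologicalSpace X]
    [SeminormedAddCommGroup E] {K : Set X} (hK : IsCompact K) {g : X → E} {f : X → ℝ}
    (hg : ContinuousOn g K) (hf : ContinuousOn f K) (hf0 : ∀ x ∈ K, 0 ≤ f x)
    (hf1 : ∀ x ∈ K, f x < 1) {δ : ℝ} (hδ : 0 < δ) :
    ∀ᶠ N in atTop, ∀ x ∈ K, ‖g x‖ * f x ^ N ≤ δ := by
  rcases K.eq_empty_or_nonempty with rfl | hne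
  · simp
  obtain ⟨x₁, hx₁, hmax⟩ := hK.exists_isMaxOn hne hf
  obtain ⟨C, hC⟩ := hK.exists_bound_of_continuousOn hg
  have hC0 : 0 ≤ C := (norm_nonneg _).trans (hC x₁ hx₁)
  have hlim : Tendsto (fun N => C * f x₁ ^ N) atTop (𝓝 0) := by
    simpa using (tendsto_pow_atTop_nhds_zero_of_lt_one (hf0 x₁ hx₁) (hf1 x₁ hx₁)).const_mul C
  filter_upwards [hlim.eventually (eventually_le_nhds hδ)] with N hN x hx
  calc ‖g x‖ * f x ^ N ≤ C * f x₁ ^ N :=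
        mul_le_mul (hC x hx) (pow_le_pow_left₀ (hf0 x hx) (hmax hx) N) (pow_nonneg (hf0 x hx) N) hC0
    _ ≤ δ := hN

/-- Near the nodes `Σ_j |p_j| ≈ 1`; away from them every factor `|z + η_j| / 2` is uniformly
below `1` by compactness. -/
lemma exists_sum_norm_mul_pow_le {ι : Type*} [Fintype ι] {η : ι → ℂ} (hη : ∀ j, ‖η j‖ = 1)
    {p : ι → ℂ → ℂ} (hp : ∀ j, Continuous (p j)) (hpη : ∀ i, ∑ j, ‖p j (η i)‖ ≤ 1)
    {ε : ℝ} (hε : 0 < ε) :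
    ∃ N : ℕ, ∀ z, ‖z‖ ≤ 1 → ∑ j, ‖p j z‖ * (‖z + η j‖ / 2) ^ N ≤ 1 + ε := by
  set U := {z : ℂ | ∑ j, ‖p j z‖ < 1 + ε}
  have hU : IsOpen U :=
    isOpen_lt (continuous_finsetSum _ fun j _ => (hp j).norm) continuous_const
  have hK : IsCompact (closedBall (0 : ℂ) 1 \ U) := (isCompact_closedBall 0 1).diff hU
  have hdecay : ∀ j, ∀ᶠ N in atTop, ∀ z ∈ closedBall (0 : ℂ) 1 \ U,
      ‖p j z‖ * (‖z + η j‖ / 2) ^ N ≤ 1 / Fintype.card ι := by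
    intro j
    have hcard : 0 < (Fintype.card ι : ℝ) := by
      have : Nonempty ι := ⟨j⟩
      exact_mod_cast Fintype.card_pos
    refine hK.eventually_forall_norm_mul_pow_le (hp j).continuousOn (by fun_prop)
      (fun z _ => by positivity) (fun z hz => ?_) (by positivity)
    have hne : z ≠ η j := by
      rintro rfl
      exact hz.2 ((hpη j).trans_lt (by linarith))
    linarith [norm_add_lt_two (mem_closedBall_zero_iff.1 hz.1) (hη j) hne]
  obtain ⟨N, hN⟩ := (eventually_all.2 hdecay).exists
  refine ⟨N, fun z hz => ?_⟩
  by_cases hzU : z ∈ U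
  · calc ∑ j, ‖p j z‖ * (‖z + η j‖ / 2) ^ N ≤ ∑ j, ‖p j z‖ := by
          gcongr with j
          refine mul_le_of_le_one_right (norm_nonneg _) (pow_le_one₀ (by positivity) ?_)
          linarith [norm_add_le z (η j), hη j]
      _ ≤ 1 + ε := hzU.le
  · calc ∑ j, ‖p j z‖ * (‖z + η j‖ / 2) ^ N ≤ ∑ _j : ι, 1 / (Fintype.card ι : ℝ) :=
          Finset.sum_le_sum fun j _ => hN j z ⟨mem_closedBall_zero_iff.2 hz, hzU⟩
      _ ≤ 1 := by
          rw [Finset.sum_const, Finset.card_univ, nsmul_eq_mul, one_div]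
          exact mul_inv_le_one
      _ ≤ 1 + ε := by linarith

theorem exists_differentiable_interpolant_norm_le {ι : Type*} [Fintype ι] {η : ι → ℂ}
    (hη : ∀ j, ‖η j‖ = 1) (hinj : Injective η) (w : ι → ℂ) {M : ℝ} (hM : ∀ j, ‖w j‖ ≤ M)
    (hM0 : 0 ≤ M) {ε : ℝ} (hε : 0 < ε) :
    ∃ G : ℂ → ℂ, Differentiable ℂ G ∧ (∀ j, G (η j) = w j) ∧
      ∀ z, ‖z‖ ≤ 1 → ‖G z‖ ≤ (1 + ε) * M := by
  classical
  set p : ι → ℂ → ℂ := fun j z => (Lagrange.basis Finset.univ η j).eval z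
  have hp : ∀ i j, p j (η i) = if i = j then 1 else 0 := by
    intro i j
    split_ifs with h
    · subst h; exact Lagrange.eval_basis_self hinj.injOn (Finset.mem_univ _)
    · exact Lagrange.eval_basis_of_ne (Ne.symm h) (Finset.mem_univ _)
  have hpeak : ∀ j, (η j + η j) / (2 * η j) = 1 := fun j => by
    rw [← two_mul, div_self (mul_ne_zero two_ne_zero (ne_zero_of_norm_ne_zero (by simp [hη])))]
  obtain ⟨N, hN⟩ := exists_sum_norm_mul_pow_le hη (p := p) (fun j => (Polynomial.continuous _))
    (fun i => by simp [hp, apply_ite norm]) hε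
  refine ⟨fun z => ∑ j, w j * p j z * ((z + η j) / (2 * η j)) ^ N, ?_, fun i => ?_, fun z hz => ?_⟩
  · have := fun j => Polynomial.differentiable (Lagrange.basis Finset.univ η j)
    fun_prop
  · simp [hp, hpeak]
  · calc ‖∑ j, w j * p j z * ((z + η j) / (2 * η j)) ^ N‖
        ≤ ∑ j, M * (‖p j z‖ * (‖z + η j‖ / 2) ^ N) := by
          refine norm_sum_le_of_le _ fun j _ => ?_
          simp only [norm_mul, norm_pow, norm_div, hη, Complex.norm_ofNat, mul_one]
          rw [mul_assoc]
          gcongr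
          exact hM j
      _ = M * ∑ j, ‖p j z‖ * (‖z + η j‖ / 2) ^ N := (Finset.mul_sum _ _ _).symm
      _ ≤ M * (1 + ε) := by gcongr; exact hN z hz
      _ = (1 + ε) * M := mul_comm _ _

lemma exists_supNorm_le_mul_iSup_norm {ι : Type*} [Fintype ι] {𝒱 : Submodule ℂ (ℂ → ℂ)}
    [FiniteDimensional ℂ 𝒱] (h𝒱 : ∀ V ∈ 𝒱, ContinuousOn V (closedBall 0 1)) {ζ : ι → ℂ}
    (hvan : ∀ V ∈ 𝒱, (∀ k, V (ζ k) = 0) → V = 0) :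
    ∃ C, ∀ V ∈ 𝒱, supNorm V ≤ C * ⨆ k, ‖V (ζ k)‖ := by
  let ev : 𝒱 →ₗ[ℂ] ι → ℂ := (LinearMap.pi fun k => LinearMap.proj (ζ k)).comp 𝒱.subtype
  have hev : Injective ev := by
    rw [← LinearMap.ker_eq_bot, LinearMap.ker_eq_bot']
    exact fun V hV => Subtype.ext (hvan V V.2 fun k => congrFun hV k)
  let res : 𝒱 →ₗ[ℂ] C(closedBall (0 : ℂ) 1, ℂ) :=
    { toFun := fun V => (⟨_, (h𝒱 V V.2).domRestrict⟩ : C(closedBall (0 : ℂ) 1, ℂ))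
      map_add' := fun _ _ => rfl
      map_smul' := fun _ _ => rfl }
  let e := LinearEquiv.ofInjective ev hev
  let A := LinearMap.toContinuousLinearMap (res ∘ₗ e.symm.toLinearMap)
  refine ⟨‖A‖, fun V hV => supNorm_le fun z hz => ?_⟩
  calc ‖V z‖ ≤ ‖res ⟨V, hV⟩‖ :=
        (res ⟨V, hV⟩).norm_coe_le_norm ⟨z, mem_closedBall_zero_iff.2 hz⟩
    _ = ‖A (e ⟨V, hV⟩)‖ := by simp [A]
    _ ≤ ‖A‖ * ‖e ⟨V, hV⟩‖ := A.le_opNorm _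
    _ ≤ ‖A‖ * ⨆ k, ‖V (ζ k)‖ := by
        gcongr
        exact (pi_norm_le_iff_of_nonneg (Real.iSup_nonneg fun _ => norm_nonneg _)).2
          (norm_le_iSup_norm_comp ζ)

lemma exists_norm_eq_one_notMem_supNorm_sub_lt {F : ℂ → ℂ} (hF : MemDiscAlgebra F) {t : Set ℂ}
    (ht : t.Finite) {δ : ℝ} (hδ : 0 < δ) : ∃ z, ‖z‖ = 1 ∧ z ∉ t ∧ supNorm F - δ < ‖F z‖ := by
  have hdc : DiffContOnCl ℂ F (ball 0 1) :=
    ⟨hF.2, by rw [closure_ball 0 one_ne_zero]; exact hF.1⟩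
  obtain ⟨z₁, hz₁, hmax⟩ :=
    Complex.exists_mem_frontier_isMaxOn_norm isBounded_ball (nonempty_ball.2 one_pos) hdc
  rw [frontier_ball 0 one_ne_zero] at hz₁
  rw [closure_ball 0 one_ne_zero] at hmax
  have hsup : supNorm F ≤ ‖F z₁‖ := supNorm_le fun z hz => hmax (mem_closedBall_zero_iff.2 hz)
  have : Nontrivial Circle := ⟨⟨1, -1, fun h => by
    have := congrArg (fun z : Circle => (z : ℂ)) h; norm_num at this⟩⟩
  let c : Circle := ⟨z₁, hz₁⟩
  have hcont : Continuous fun z : Circle => F z :=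
    hF.1.comp_continuous (by fun_prop) fun z => by simp [Circle.norm_coe]
  have hnear : ∀ᶠ z : Circle in 𝓝 c, supNorm F - δ < ‖F z‖ :=
    (hcont.norm.tendsto c).eventually (lt_mem_nhds (by simp only [c]; linarith))
  have havoid : ∀ᶠ z : Circle in 𝓝[≠] c, (z : ℂ) ∉ t := by
    have hfin : (((↑) : Circle → ℂ) ⁻¹' t).Finite := ht.preimage Circle.coe_injective.injOn
    filter_upwards [nhdsNE_of_nhdsNE_sdiff_finite univ_mem hfin.to_subtype] with z hz using hz.2
  obtain ⟨z, hz, hzt⟩ := ((hnear.filter_mono nhdsWithin_le_nhds).and havoid).exists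
  exact ⟨z, Circle.norm_coe z, hzt, hz⟩

lemma exists_norm_eq_norm_sub_eq_add (a : ℂ) {r : ℝ} (hr : 0 ≤ r) :
    ∃ w : ℂ, ‖w‖ = r ∧ ‖a - w‖ = ‖a‖ + r := by
  have hpolar := Complex.norm_mul_exp_arg_mul_I a
  refine ⟨-(r * Complex.exp (a.arg * Complex.I)), by simp [abs_of_nonneg hr], ?_⟩
  have : a - -(r * Complex.exp (a.arg * Complex.I)) =
      ((‖a‖ + r : ℝ) : ℂ) * Complex.exp (a.arg * Complex.I) := by
    push_cast
    linear_combination -hpolar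
  rw [this, norm_mul, Complex.norm_exp_ofReal_mul_I, mul_one,
    Complex.norm_of_nonneg (by positivity)]

lemma exists_vanishing_supNorm_ge {ι : Type*} [Fintype ι] {ζ : ι → ℂ} (hζ : ∀ k, ‖ζ k‖ = 1)
    (hinj : Injective ζ) {V : ℂ → ℂ} (hV : MemDiscAlgebra V) {δ ε : ℝ} (hδ : 0 < δ)
    (hε : 0 < ε) :
    ∃ F, MemDiscAlgebra F ∧ (∀ k, F (ζ k) = 0) ∧
      supNorm V - δ + ⨆ k, ‖V (ζ k)‖ ≤ supNorm F ∧
      supNorm (F - V) ≤ (1 + ε) * ⨆ k, ‖V (ζ k)‖ := by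
  set M := ⨆ k, ‖V (ζ k)‖
  have hM0 : 0 ≤ M := Real.iSup_nonneg fun _ => norm_nonneg _
  obtain ⟨z₀, hz₀, hz₀ζ, hVz₀⟩ := exists_norm_eq_one_notMem_supNorm_sub_lt hV (Set.finite_range ζ) hδ
  obtain ⟨w₀, hw₀, hVw₀⟩ := exists_norm_eq_norm_sub_eq_add (V z₀) hM0
  have hη : Injective fun o : Option ι => o.elim z₀ ζ := by
    rintro (_ | i) (_ | j) h
    · rfl
    · exact absurd ⟨j, h.symm⟩ hz₀ζ
    · exact absurd ⟨i, h⟩ hz₀ζ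
    · exact congrArg some (hinj h)
  obtain ⟨G, hGd, hGη, hG⟩ := exists_differentiable_interpolant_norm_le
    (fun o => by cases o <;> simp [hz₀, hζ]) hη (fun o => o.elim w₀ fun k => V (ζ k))
    (M := M) (fun o => by
      cases o with
      | none => simp [hw₀]
      | some k => exact norm_le_iSup_norm_comp ζ k)
    hM0 hε
  refine ⟨V - G, ⟨hV.1.sub hGd.continuous.continuousOn, hV.2.sub hGd.differentiableOn⟩,
    fun k => by simpa [sub_eq_zero] using (hGη (some k)).symm, ?_, ?_⟩
  · calc supNorm V - δ + M ≤ ‖V z₀ - G z₀‖ := by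
          rw [show G z₀ = w₀ from hGη none, hVw₀]; linarith
      _ ≤ supNorm (V - G) := norm_le_supNorm (hV.1.sub hGd.continuous.continuousOn) hz₀.le
  · rw [sub_sub_cancel_left]
    exact supNorm_le fun z hz => by simpa using hG z hz

section Ratios

variable {ι : Type*} {𝒱 : Submodule ℂ (ℂ → ℂ)} {ζ : ι → ℂ}

/-- Its supremum is the compatibility indicator `μ_A(ker L_ζ, 𝒱)`. -/
def compatibilityRatios (𝒱 : Submodule ℂ (ℂ → ℂ)) (ζ : ι → ℂ) : Set ℝ :=
  {x | ∃ F : ℂ → ℂ, MemDiscAlgebra F ∧ F ≠ 0 ∧ (∀ k, F (ζ k) = 0) ∧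
    x = supNorm F / distSup F 𝒱}

def observationRatios (𝒱 : Submodule ℂ (ℂ → ℂ)) (ζ : ι → ℂ) : Set ℝ :=
  {x | ∃ V ∈ 𝒱, V ≠ 0 ∧ x = supNorm V / ⨆ k, ‖V (ζ k)‖}

lemma iSup_norm_pos [Finite ι] (hvan : ∀ V ∈ 𝒱, (∀ k, V (ζ k) = 0) → V = 0) {V : ℂ → ℂ}
    (hV : V ∈ 𝒱) (hV0 : V ≠ 0) : 0 < ⨆ k, ‖V (ζ k)‖ := by
  refine (Real.iSup_nonneg fun _ => norm_nonneg _).lt_of_ne fun h => hV0 (hvan V hV fun k => ?_)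
  exact norm_le_zero_iff.1 ((norm_le_iSup_norm_comp ζ k).trans h.symm.le)

lemma bddAbove_observationRatios [Fintype ι] [FiniteDimensional ℂ 𝒱]
    (h𝒱 : ∀ V ∈ 𝒱, ContinuousOn V (closedBall 0 1))
    (hvan : ∀ V ∈ 𝒱, (∀ k, V (ζ k) = 0) → V = 0) : BddAbove (observationRatios 𝒱 ζ) := by
  obtain ⟨C, hC⟩ := exists_supNorm_le_mul_iSup_norm h𝒱 hvan
  refine ⟨C, ?_⟩
  rintro _ ⟨V, hV, hV0, rfl⟩
  exact (div_le_iff₀ (iSup_norm_pos hvan hV hV0)).2 (hC V hV)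

lemma csSup_observationRatios_nonneg : 0 ≤ sSup (observationRatios 𝒱 ζ) := by
  refine Real.sSup_nonneg ?_
  rintro _ ⟨V, -, -, rfl⟩
  exact div_nonneg (supNorm_nonneg V) (Real.iSup_nonneg fun _ => norm_nonneg _)

lemma supNorm_le_csSup_observationRatios_mul [Finite ι] (hbdd : BddAbove (observationRatios 𝒱 ζ))
    (hvan : ∀ V ∈ 𝒱, (∀ k, V (ζ k) = 0) → V = 0) {V : ℂ → ℂ} (hV : V ∈ 𝒱) :
    supNorm V ≤ sSup (observationRatios 𝒱 ζ) * ⨆ k, ‖V (ζ k)‖ := by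
  by_cases hV0 : V = 0
  · rw [hV0, supNorm_zero]
    exact mul_nonneg csSup_observationRatios_nonneg (Real.iSup_nonneg fun _ => norm_nonneg _)
  · exact (div_le_iff₀ (iSup_norm_pos hvan hV hV0)).1 (le_csSup hbdd ⟨V, hV, hV0, rfl⟩)

variable {C : ℝ}

lemma supNorm_le_one_add_mul_distSup (hζ : ∀ k, ‖ζ k‖ ≤ 1)
    (h𝒱 : ∀ V ∈ 𝒱, ContinuousOn V (closedBall 0 1)) (hC0 : 0 ≤ C)
    (hC : ∀ V ∈ 𝒱, supNorm V ≤ C * ⨆ k, ‖V (ζ k)‖) {F : ℂ → ℂ}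
    (hF : ContinuousOn F (closedBall 0 1)) (hFζ : ∀ k, F (ζ k) = 0) :
    supNorm F ≤ (1 + C) * distSup F 𝒱 := by
  rw [distSup, Real.mul_iInf_of_nonneg (by linarith)]
  refine le_ciInf fun ⟨V, hV⟩ => ?_
  have hFV : ContinuousOn (F - V) (closedBall 0 1) := hF.sub (h𝒱 V hV)
  have hVζ : ⨆ k, ‖V (ζ k)‖ ≤ supNorm (F - V) := by
    simpa [hFζ] using iSup_norm_comp_le_supNorm hζ hFV
  calc supNorm F = supNorm ((F - V) + V) := by rw [sub_add_cancel]
    _ ≤ supNorm (F - V) + supNorm V := supNorm_add_le hFV (h𝒱 V hV)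
    _ ≤ supNorm (F - V) + C * supNorm (F - V) := by grw [hC V hV, hVζ]
    _ = (1 + C) * supNorm (F - V) := by ring

lemma le_one_add_of_mem_compatibilityRatios (hζ : ∀ k, ‖ζ k‖ ≤ 1)
    (h𝒱 : ∀ V ∈ 𝒱, ContinuousOn V (closedBall 0 1)) (hC0 : 0 ≤ C)
    (hC : ∀ V ∈ 𝒱, supNorm V ≤ C * ⨆ k, ‖V (ζ k)‖) {x : ℝ}
    (hx : x ∈ compatibilityRatios 𝒱 ζ) : x ≤ 1 + C := by
  obtain ⟨F, hF, -, hFζ, rfl⟩ := hx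
  exact div_le_of_le_mul₀ (distSup_nonneg F 𝒱) (by linarith)
    (supNorm_le_one_add_mul_distSup hζ h𝒱 hC0 hC hF.1 hFζ)

lemma exists_mem_compatibilityRatios_ge [Fintype ι] (hζ : ∀ k, ‖ζ k‖ = 1) (hinj : Injective ζ)
    (h𝒱 : ∀ V ∈ 𝒱, MemDiscAlgebra V) (hC0 : 0 ≤ C)
    (hC : ∀ V ∈ 𝒱, supNorm V ≤ C * ⨆ k, ‖V (ζ k)‖) {V : ℂ → ℂ} (hV : V ∈ 𝒱)
    (hM : 0 < ⨆ k, ‖V (ζ k)‖) {ε : ℝ} (hε : ε ∈ Set.Ioo 0 1) :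
    ∃ x ∈ compatibilityRatios 𝒱 ζ, (supNorm V / (⨆ k, ‖V (ζ k)‖) + 1 - ε) / (1 + ε) ≤ x := by
  set M := ⨆ k, ‖V (ζ k)‖
  obtain ⟨F, hF, hFζ, hFlow, hFV⟩ :=
    exists_vanishing_supNorm_ge hζ hinj (h𝒱 V hV) (mul_pos hε.1 hM) hε.1
  have hF0 : 0 < supNorm F := by nlinarith [supNorm_nonneg V, hε.2]
  have hd : 0 < distSup F 𝒱 := pos_of_mul_pos_right (hF0.trans_le
    (supNorm_le_one_add_mul_distSup (fun k => (hζ k).le) (fun V hV => (h𝒱 V hV).1) hC0 hC hF.1 hFζ))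
    (by linarith)
  refine ⟨_, ⟨F, hF, fun h => by simp [h, supNorm_zero] at hF0, hFζ, rfl⟩, ?_⟩
  calc (supNorm V / M + 1 - ε) / (1 + ε) = (supNorm V - ε * M + M) / ((1 + ε) * M) := by
        field_simp
        ring
    _ ≤ supNorm F / ((1 + ε) * M) := by
        gcongr
        exact (mul_pos (by linarith [hε.1]) hM).le
    _ ≤ supNorm F / distSup F 𝒱 := by gcongr; exact (distSup_le hV).trans hFV

lemma one_add_le_csSup_compatibilityRatios [Fintype ι] (hζ : ∀ k, ‖ζ k‖ = 1)
    (hinj : Injective ζ) (h𝒱 : ∀ V ∈ 𝒱, MemDiscAlgebra V) (hC0 : 0 ≤ C)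
    (hC : ∀ V ∈ 𝒱, supNorm V ≤ C * ⨆ k, ‖V (ζ k)‖) (hbdd : BddAbove (compatibilityRatios 𝒱 ζ))
    {V : ℂ → ℂ} (hV : V ∈ 𝒱) (hM : 0 < ⨆ k, ‖V (ζ k)‖) :
    1 + supNorm V / ⨆ k, ‖V (ζ k)‖ ≤ sSup (compatibilityRatios 𝒱 ζ) := by
  set t := supNorm V / ⨆ k, ‖V (ζ k)‖
  have hlim : Tendsto (fun ε : ℝ => (t + 1 - ε) / (1 + ε)) (𝓝[>] 0) (𝓝 (1 + t)) := by
    have : ContinuousAt (fun ε : ℝ => (t + 1 - ε) / (1 + ε)) 0 := by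
      fun_prop (disch := norm_num)
    simpa [add_comm] using this.tendsto.mono_left nhdsWithin_le_nhds
  refine le_of_tendsto hlim ?_
  filter_upwards [Ioo_mem_nhdsGT one_pos] with ε hε
  obtain ⟨x, hx, hle⟩ := exists_mem_compatibilityRatios_ge hζ hinj h𝒱 hC0 hC hV hM hε
  exact hle.trans (le_csSup hbdd hx)

end Ratios

theorem stmt17_general (𝒱 : Submodule ℂ (ℂ → ℂ)) (hfd : FiniteDimensional ℂ 𝒱) (h𝒱0 : 𝒱 ≠ ⊥)
    (h𝒱 : ∀ V ∈ 𝒱, MemDiscAlgebra V)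
    {m : ℕ} (ζ : Fin m → ℂ)
    (hζ : ∀ k, ‖ζ k‖ = 1) (hinj : Function.Injective ζ)
    (hvan : ∀ V ∈ 𝒱, (∀ k, V (ζ k) = 0) → V = 0) :
    sSup {x : ℝ | ∃ F : ℂ → ℂ, MemDiscAlgebra F ∧ F ≠ 0 ∧
        (∀ k, F (ζ k) = 0) ∧ x = supNorm F / distSup F 𝒱}
      = 1 + sSup {x : ℝ | ∃ V ∈ 𝒱, V ≠ 0 ∧
        x = supNorm V / ⨆ k, ‖V (ζ k)‖} := by
  change sSup (compatibilityRatios 𝒱 ζ) = 1 + sSup (observationRatios 𝒱 ζ)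
  obtain ⟨V₀, hV₀, hV₀0⟩ := Submodule.exists_mem_ne_zero_of_ne_bot h𝒱0
  have hT := bddAbove_observationRatios (fun V hV => (h𝒱 V hV).1) hvan
  have hC := fun V hV => supNorm_le_csSup_observationRatios_mul hT hvan (V := V) hV
  have hC0 := csSup_observationRatios_nonneg (𝒱 := 𝒱) (ζ := ζ)
  have hS : ∀ x ∈ compatibilityRatios 𝒱 ζ, x ≤ 1 + sSup (observationRatios 𝒱 ζ) :=
    fun x => le_one_add_of_mem_compatibilityRatios (fun k => (hζ k).le)
      (fun V hV => (h𝒱 V hV).1) hC0 hC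
  obtain ⟨x₀, hx₀, -⟩ := exists_mem_compatibilityRatios_ge hζ hinj h𝒱 hC0 hC hV₀
    (iSup_norm_pos hvan hV₀ hV₀0) (ε := 1 / 2) (by norm_num)
  refine le_antisymm (csSup_le ⟨x₀, hx₀⟩ hS) ?_
  rw [← le_sub_iff_add_le']
  refine csSup_le ⟨_, V₀, hV₀, hV₀0, rfl⟩ ?_
  rintro _ ⟨V, hV, hV0, rfl⟩
  exact le_sub_iff_add_le'.2 (one_add_le_csSup_compatibilityRatios hζ hinj h𝒱 hC0 hC ⟨_, hS⟩ hV
    (iSup_norm_pos hvan hV hV0))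

/-- The key observation on the compatibility indicator in the disc algebra:
`μ_A(ker L_ζ, 𝒱) = 1 + sup_{V ∈ 𝒱, V ≠ 0} ‖V‖_∞ / max_k |V(ζ_k)|`. -/
theorem stmt17 (𝒱 : Submodule ℂ (ℂ → ℂ)) (hfd : FiniteDimensional ℂ 𝒱) (h𝒱0 : 𝒱 ≠ ⊥)
    (h𝒱 : ∀ V ∈ 𝒱, MemDiscAlgebra V)
    {m : ℕ} (hm : 0 < m) (ζ : Fin m → ℂ)
    (hζ : ∀ k, ‖ζ k‖ = 1) (hinj : Function.Injective ζ)
    (hvan : ∀ V ∈ 𝒱, (∀ k, V (ζ k) = 0) → V = 0) :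
    sSup {x : ℝ | ∃ F : ℂ → ℂ, MemDiscAlgebra F ∧ F ≠ 0 ∧
        (∀ k, F (ζ k) = 0) ∧ x = supNorm F / distSup F 𝒱}
      = 1 + sSup {x : ℝ | ∃ V ∈ 𝒱, V ≠ 0 ∧
        x = supNorm V / ⨆ k, ‖V (ζ k)‖} :=
  stmt17_general 𝒱 hfd h𝒱0 h𝒱 ζ hζ hinj hvan
end
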